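/- Let α ∈ (0,1) and β < 1+α. Then for every k ∈ ℕ there exists a constant C′_k > 0, depending only on α, β and k, such that for all real s ≥ 1: |∫₀^∞ ω^k e^{−sω} ψ_{α,β}(ω) dω| ≤ C′_k s^{−k−α+β−1} if α ≠ β, and |∫₀^∞ ω^k e^{−sω} ψ_{α,α}(ω) dω| ≤ C′_k s^{−k−2α+α−1} = C′_k s^{−k−α−1} if α = β. -/

import Mathlib

/-!
Since the denominator of `ψ_{α,β}(ω)` equals `(ω^α + cos πα)² + sin² πα ≥ sin² πα`, the function
`|ψ_{α,β}|` is dominated by `(|sin πβ| ω^{2α-β} + |sin π(β-α)| ω^{α-β}) / sin² πα`. The Laplace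
moment `∫ ω^k e^{-sω} ω^q dω` is `Γ(k+q+1) s^{-(k+q+1)}`, and for `s ≥ 1` the slower decay
`s^{-(k+α-β+1)}` dominates. When `β = α` the coefficient `sin π(β-α)` vanishes and only
`s^{-(k+α+1)}` remains.
-/

open MeasureTheory

/-- The function ψ_{α,β}(ω) = (ω^{2α−β} sin(πβ) − ω^{α−β} sin(π(β−α)))
/ (ω^{2α} + 2ω^α cos(πα) + 1) for ω > 0. -/
noncomputable def psiml (α β : ℝ) (ω : ℝ) : ℝ :=
  (ω ^ (2 * α - β) * Real.sin (Real.pi * β) -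
      ω ^ (α - β) * Real.sin (Real.pi * (β - α))) /
    (ω ^ (2 * α) + 2 * ω ^ α * Real.cos (Real.pi * α) + 1)

open Real Set

lemma integrableOn_rpow_mul_exp_neg_mul_Ioi {q s : ℝ} (hq : -1 < q) (hs : 0 < s) :
    IntegrableOn (fun ω : ℝ => ω ^ q * exp (-s * ω)) (Ioi 0) := by
  simpa using integrableOn_rpow_mul_exp_neg_mul_rpow hq one_pos hs

lemma integral_rpow_mul_exp_neg_mul_Ioi_eq_Gamma {q s : ℝ} (hq : -1 < q) (hs : 0 < s) :
    ∫ ω in Ioi (0 : ℝ), ω ^ q * exp (-s * ω) = Gamma (q + 1) * s ^ (-(q + 1)) := by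
  simpa [mul_comm] using integral_rpow_mul_exp_neg_mul_rpow one_pos hq hs

lemma abs_integral_pow_mul_exp_neg_mul_le {f : ℝ → ℝ} {a b p q s : ℝ} (k : ℕ)
    (hf : ∀ ω, 0 < ω → |f ω| ≤ a * ω ^ p + b * ω ^ q)
    (hp : -1 < k + p) (hq : -1 < k + q) (hs : 0 < s) :
    |∫ ω in Ioi (0 : ℝ), ω ^ k * exp (-s * ω) * f ω| ≤
      a * Gamma (k + p + 1) * s ^ (-(k + p + 1)) + b * Gamma (k + q + 1) * s ^ (-(k + q + 1)) := by
  have hp' := (integrableOn_rpow_mul_exp_neg_mul_Ioi hp hs).const_mul a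
  have hq' := (integrableOn_rpow_mul_exp_neg_mul_Ioi hq hs).const_mul b
  have hbound : ∀ ω ∈ Ioi (0 : ℝ), ‖ω ^ k * exp (-s * ω) * f ω‖ ≤
      a * (ω ^ ((k : ℝ) + p) * exp (-s * ω)) + b * (ω ^ ((k : ℝ) + q) * exp (-s * ω)) := by
    intro ω (hω : 0 < ω)
    rw [rpow_add hω, rpow_add hω, rpow_natCast, Real.norm_eq_abs, abs_mul,
      abs_of_nonneg (by positivity)]
    calc ω ^ k * exp (-s * ω) * |f ω| ≤ ω ^ k * exp (-s * ω) * (a * ω ^ p + b * ω ^ q) :=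
          mul_le_mul_of_nonneg_left (hf ω hω) (by positivity)
      _ = _ := by ring
  calc _ ≤ ∫ ω in Ioi (0 : ℝ),
        a * (ω ^ ((k : ℝ) + p) * exp (-s * ω)) + b * (ω ^ ((k : ℝ) + q) * exp (-s * ω)) :=
        norm_integral_le_of_norm_le (hp'.add hq')
          ((ae_restrict_iff' measurableSet_Ioi).2 (Filter.Eventually.of_forall hbound))
    _ = _ := by
      rw [integral_add hp' hq', integral_const_mul, integral_const_mul,
        integral_rpow_mul_exp_neg_mul_Ioi_eq_Gamma hp hs,
        integral_rpow_mul_exp_neg_mul_Ioi_eq_Gamma hq hs]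
      ring

lemma sin_sq_le_psiml_denom (α : ℝ) {ω : ℝ} (hω : 0 ≤ ω) :
    sin (π * α) ^ 2 ≤ ω ^ (2 * α) + 2 * ω ^ α * cos (π * α) + 1 := by
  have hsq : ω ^ (2 * α) = (ω ^ α) ^ 2 := by
    rw [mul_comm, rpow_mul hω, rpow_two]
  nlinarith [sin_sq_add_cos_sq (π * α), sq_nonneg (ω ^ α + cos (π * α))]

lemma abs_psiml_le {α β ω : ℝ} (hα : sin (π * α) ≠ 0) (hω : 0 < ω) :
    |psiml α β ω| ≤ |sin (π * β)| / sin (π * α) ^ 2 * ω ^ (2 * α - β) +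
      |sin (π * (β - α))| / sin (π * α) ^ 2 * ω ^ (α - β) := by
  have hden := sin_sq_le_psiml_denom α hω.le
  have hc : 0 < sin (π * α) ^ 2 := by positivity
  have h₁ : 0 ≤ ω ^ (2 * α - β) := rpow_nonneg hω.le _
  have h₂ : 0 ≤ ω ^ (α - β) := rpow_nonneg hω.le _
  rw [psiml, abs_div, abs_of_pos (hc.trans_le hden)]
  calc _ ≤ |ω ^ (2 * α - β) * sin (π * β) - ω ^ (α - β) * sin (π * (β - α))| /
        sin (π * α) ^ 2 := div_le_div_of_nonneg_left (abs_nonneg _) hc hden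
    _ ≤ (ω ^ (2 * α - β) * |sin (π * β)| + ω ^ (α - β) * |sin (π * (β - α))|) /
        sin (π * α) ^ 2 := by
      gcongr
      refine (abs_sub _ _).trans_eq ?_
      rw [abs_mul, abs_mul, abs_of_nonneg h₁, abs_of_nonneg h₂]
    _ = _ := by ring

/-- For α ∈ (0,1), β < 1+α and k ∈ ℕ there exists C′_k > 0
(depending only on α, β, k) such that for all real s ≥ 1:
|∫₀^∞ ω^k e^{−sω} ψ_{α,β}(ω) dω| ≤ C′_k s^{−k−α+β−1} if α ≠ β, and
|∫₀^∞ ω^k e^{−sω} ψ_{α,α}(ω) dω| ≤ C′_k s^{−k−α−1} if α = β. -/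
theorem psiml_laplace_deriv_bound_large_s
    (α β : ℝ) (hα : α ∈ Set.Ioo (0 : ℝ) 1) (hβ : β < 1 + α) (k : ℕ) :
    ∃ C > (0 : ℝ), ∀ s : ℝ, 1 ≤ s →
      (α ≠ β →
        |∫ ω in Set.Ioi (0 : ℝ), ω ^ k * Real.exp (-s * ω) * psiml α β ω| ≤
          C * s ^ (-(k : ℝ) - α + β - 1)) ∧
      (α = β →
        |∫ ω in Set.Ioi (0 : ℝ), ω ^ k * Real.exp (-s * ω) * psiml α α ω| ≤
          C * s ^ (-(k : ℝ) - α - 1)) := by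
  obtain ⟨hα₀, hα₁⟩ := hα
  have hc : 0 < sin (π * α) := sin_pos_of_pos_of_lt_pi (by positivity) (by nlinarith [pi_pos])
  have hp : -1 < (k : ℝ) + (2 * α - β) := by linarith [k.cast_nonneg (α := ℝ)]
  have hq : -1 < (k : ℝ) + (α - β) := by linarith [k.cast_nonneg (α := ℝ)]
  have hΓp := Gamma_pos_of_pos (show 0 < (k : ℝ) + (2 * α - β) + 1 by linarith)
  have hΓq := Gamma_pos_of_pos (show 0 < (k : ℝ) + (α - β) + 1 by linarith)
  have laplace_bound := fun s (hs : 0 < s) => abs_integral_pow_mul_exp_neg_mul_le k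
    (fun ω hω => abs_psiml_le (β := β) hc.ne' hω) hp hq hs
  refine ⟨(Gamma (k + (2 * α - β) + 1) + Gamma (k + (α - β) + 1)) / sin (π * α) ^ 2,
    by positivity, fun s hs => ⟨fun _ => ?_, fun hαβ => ?_⟩⟩
  · calc _ ≤ _ := laplace_bound s (by linarith)
      _ ≤ 1 / sin (π * α) ^ 2 * Gamma (k + (2 * α - β) + 1) * s ^ (-(k : ℝ) - α + β - 1) +
          1 / sin (π * α) ^ 2 * Gamma (k + (α - β) + 1) * s ^ (-(k : ℝ) - α + β - 1) := by
        gcongr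
        · exact abs_sin_le_one _
        · linarith
        · exact abs_sin_le_one _
        · linarith
      _ = _ := by ring
  · subst hαβ
    have key := laplace_bound s (by linarith)
    rw [sub_self, mul_zero, sin_zero, abs_zero, zero_div, zero_mul, zero_mul, add_zero] at key
    calc _ ≤ _ := key
      _ ≤ 1 / sin (π * α) ^ 2 * Gamma (k + (2 * α - α) + 1) * s ^ (-(k : ℝ) - α - 1) := by
        gcongr
        · exact abs_sin_le_one _
        · linarith
      _ ≤ _ := by
        rw [one_div_mul_eq_div]
        gcongr
        exact le_add_of_nonneg_right hΓq.le
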